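/- For all s, t ∈ μ_r, v ∈ A_1, and w ∈ A_r: (zv) ⋄_s (z_t^δ w) = z(v ⋄_s z_t^δ w) + z_t^δ(zv ⋄_t w) − z z_t^δ(v ⋄_t w). -/

import Mathlib

open FreeAlgebra

/-- Alphabet of `A_1 = ℚ⟨x,y⟩`. -/
inductive LetA : Type | x : LetA | y : LetA

/-- Alphabet of `A_r = ℚ⟨x, y_s : s ∈ μ_r⟩`; the group `G` plays the role of `μ_r`. -/
inductive LetR (G : Type) : Type | x : LetR G | y : G → LetR G

/-- `A_1 = ℚ⟨x, y⟩`. -/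
abbrev A1 : Type := FreeAlgebra ℚ LetA

/-- `A_r = ℚ⟨x, y_s : s ∈ μ_r⟩`. -/
abbrev Ar (G : Type) : Type := FreeAlgebra ℚ (LetR G)

noncomputable def X1 : A1 := ι ℚ LetA.x
noncomputable def Y1 : A1 := ι ℚ LetA.y

variable {G : Type} [CommGroup G]

noncomputable def Xr : Ar G := ι ℚ LetR.x
noncomputable def Yr (s : G) : Ar G := ι ℚ (LetR.y s)

/-- `z = x + y_1`. -/
noncomputable def zet : Ar G := Xr + Yr 1

open scoped Classical in
/-- `z_s^δ = x + δ(s) y_s` with `δ(1) = 0`, `δ(s) = 1` otherwise. -/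
noncomputable def zdel (s : G) : Ar G := if s = 1 then Xr else Xr + Yr s

/-- The involutive automorphism `φ` of `A_r`: `φ(x) = z`, `φ(y_s) = z_s^δ - z`. -/
noncomputable def phi : Ar G →ₐ[ℚ] Ar G :=
  lift ℚ (fun l => match l with
    | LetR.x => zet
    | LetR.y s => zdel s - zet)

/-- The natural embedding `A_1 → A_r`, `x ↦ x`, `y ↦ y_1`. -/
noncomputable def jm : A1 →ₐ[ℚ] Ar G :=
  lift ℚ (fun l => match l with
    | LetA.x => Xr
    | LetA.y => Yr 1)

open scoped Classical in
/-- The anti-automorphism `τ` of `A_r`: `τ(x) = y_1`, `τ(y_1) = x`, `τ(y_s) = -y_s` (`s ≠ 1`). -/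
noncomputable def tauR : Ar G →ₗ[ℚ] Ar G :=
  (MulOpposite.opLinearEquiv ℚ).symm.toLinearMap ∘ₗ
    (lift ℚ (fun l => match l with
      | LetR.x => MulOpposite.op (Yr 1)
      | LetR.y s => MulOpposite.op (if s = 1 then Xr else -(Yr s)) ) :
        Ar G →ₐ[ℚ] (Ar G)ᵐᵒᵖ).toLinearMap

/-- The anti-automorphism `τ` of `A_1`: `τ(x) = y`, `τ(y) = x`. -/
noncomputable def tau1 : A1 →ₗ[ℚ] A1 :=
  (MulOpposite.opLinearEquiv ℚ).symm.toLinearMap ∘ₗ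
    (lift ℚ (fun l => match l with
      | LetA.x => MulOpposite.op Y1
      | LetA.y => MulOpposite.op X1) : A1 →ₐ[ℚ] A1ᵐᵒᵖ).toLinearMap

/-- `wordP [(a₁,s₁),...,(a_l,s_l)] = x^{a₁} y_{s₁} ⋯ x^{a_l} y_{s_l}`,
i.e. the word `z_{a₁+1, s₁} ⋯ z_{a_l+1, s_l}`. -/
noncomputable def wordP (L : List (ℕ × G)) : Ar G :=
  (L.map (fun p => Xr ^ p.1 * Yr p.2)).prod

/-- Cumulative-product reindexing of subscripts: this realizes the composition `I ∘ M_s`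
on subscript lists, sending `(s₁, s₂, …, s_l)` to `(s s₁, s s₁ s₂, …, s s₁ ⋯ s_l)`. -/
def cumul : G → List (ℕ × G) → List (ℕ × G)
  | _, [] => []
  | g, p :: L => (p.1, g * p.2) :: cumul (g * p.2) L

/-- All the data entering the definition of the diamond products `⋄_s`:
the harmonic product `*`, the maps `ψ_s = φ ∘ I ∘ M_s`, and the family of
`ℚ`-bilinear diamond products `D s : A_1 × A_r → A_r` (together with the
corestriction `D1` of `⋄_1` to `A_1 × A_1 → A_1`), each characterized by its
defining recursive rules. -/
structure DiamondSetup (G : Type) [CommGroup G] where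
  /-- the harmonic product -/
  hst : Ar G →ₗ[ℚ] Ar G →ₗ[ℚ] Ar G
  one_hst : ∀ w, hst 1 w = w
  hst_one : ∀ v, hst v 1 = v
  hst_xr : ∀ v w, hst (v * Xr) w = hst v w * Xr
  hst_xl : ∀ v w, hst v (w * Xr) = hst v w * Xr
  hst_yy : ∀ (v w : Ar G) (s t : G), hst (v * Yr s) (w * Yr t) =
      hst v (w * Yr t) * Yr s + hst (v * Yr s) w * Yr t + hst v w * (Xr * Yr (s * t))
  /-- the linear automorphisms `ψ_s = φ ∘ I ∘ M_s` -/
  psi : G → (Ar G ≃ₗ[ℚ] Ar G)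
  psi_spec : ∀ (s : G) (L : List (ℕ × G)) (a : ℕ),
      psi s (wordP L * Xr ^ a) = phi (wordP (cumul s L) * Xr ^ a)
  /-- the diamond products `⋄_s : A_1 × A_r → A_r` -/
  D : G → A1 →ₗ[ℚ] Ar G →ₗ[ℚ] Ar G
  one_D : ∀ (s : G) (w : Ar G), D s 1 w = w
  D_one : ∀ (s : G) (v : A1), D s v 1 = psi s (phi (jm v))
  Dxx : ∀ (s : G) (v : A1) (w : Ar G), D s (v * X1) (w * Xr) =
      D s v (w * Xr) * Xr - D s (v * Y1) w * Xr
  Dyx : ∀ (s : G) (v : A1) (w : Ar G), D s (v * Y1) (w * Xr) =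
      D s v (w * Xr) * Yr 1 + D s (v * Y1) w * Xr
  Dxy : ∀ (s : G) (v : A1) (w : Ar G), D s (v * X1) (w * Yr 1) =
      D s v (w * Yr 1) * Xr + D s (v * X1) w * Yr 1
  Dyy : ∀ (s : G) (v : A1) (w : Ar G), D s (v * Y1) (w * Yr 1) =
      D s v (w * Yr 1) * Yr 1 - D s (v * X1) w * Yr 1
  Dxyt : ∀ (s t : G), t ≠ 1 → ∀ (v : A1) (w : Ar G), D s (v * X1) (w * Yr t) =
      D s v (w * Yr t) * Xr + D s v (w * (Xr + Yr t)) * Yr t - D s (v * Y1) w * Yr t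
  Dyyt : ∀ (s t : G), t ≠ 1 → ∀ (v : A1) (w : Ar G), D s (v * Y1) (w * Yr t) =
      D s v (w * Yr t) * Yr 1 - D s v (w * (Xr + Yr t)) * Yr t + D s (v * Y1) w * Yr t
  /-- `⋄_1` as a product `A_1 × A_1 → A_1` -/
  D1 : A1 →ₗ[ℚ] A1 →ₗ[ℚ] A1
  D1_spec : ∀ u v : A1, jm (D1 u v) = D 1 u (jm v)


/-!
The recursion rules of `⋄_s` for right multiplication by letters do not involve `s` and commute
with left multiplication in either argument and in the value. Hence the difference of the two
sides, as a bilinear map of `(v, w)`, obeys them as well, and by induction on words it vanishes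
once it vanishes at `v = 1` and at `w = 1`.

At `v = 1` the identity reduces to `z ⋄_s u = u z`, the sum of the rules for `x` and `y` at
`v = 1`. For `w = 1`: unwinding `ψ_s φ` on words gives `v ⋄_s 1 = χ_s(v)` for the algebra map
`χ_s : x ↦ z_s^δ, y ↦ z - z_s^δ`, and any bilinear map obeying the rules and vanishing at `w = 1`
satisfies `F(v, z_t^δ) = F(1, z_t^δ) χ_t(v)`, since the rules for `v x` and `v y` against `z_t^δ`
multiply on the right by `χ_t(x)` and `χ_t(y)`. Apply this to `F(v, w) = (zv) ⋄_s w - z (v ⋄_s w)`.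
-/

namespace FreeAlgebra

variable {R X : Type*} [CommSemiring R]

theorem induction_mul_ι {motive : FreeAlgebra R X → Prop} (one : motive 1)
    (mul_ι : ∀ a x, motive a → motive (a * ι R x))
    (add : ∀ a b, motive a → motive b → motive (a + b))
    (smul : ∀ (r : R) a, motive a → motive (r • a)) (a : FreeAlgebra R X) : motive a := by
  let p : Submodule R (FreeAlgebra R X) :=
    { carrier := {a | motive a}
      add_mem' := add _ _
      zero_mem' := by simpa using smul 0 1 one
      smul_mem' := smul }
  suffices ∀ b, ∀ a ∈ p, a * b ∈ p from one_mul a ▸ this a 1 one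
  intro b
  induction b with
  | grade0 r => intro a ha; rw [← Algebra.commutes, ← Algebra.smul_def]; exact p.smul_mem r ha
  | grade1 x => exact fun a ha => mul_ι a x ha
  | mul b c hb hc => intro a ha; rw [← mul_assoc]; exact hc _ (hb a ha)
  | add b c hb hc => intro a ha; rw [mul_add]; exact p.add_mem (hb a ha) (hc a ha)

theorem induction_ι_mul {motive : FreeAlgebra R X → Prop} (one : motive 1)
    (ι_mul : ∀ x a, motive a → motive (ι R x * a))
    (add : ∀ a b, motive a → motive b → motive (a + b))
    (smul : ∀ (r : R) a, motive a → motive (r • a)) (a : FreeAlgebra R X) : motive a := by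
  let p : Submodule R (FreeAlgebra R X) :=
    { carrier := {a | motive a}
      add_mem' := add _ _
      zero_mem' := by simpa using smul 0 1 one
      smul_mem' := smul }
  suffices ∀ b, ∀ a ∈ p, b * a ∈ p from mul_one a ▸ this a 1 one
  intro b
  induction b with
  | grade0 r => intro a ha; rw [← Algebra.smul_def]; exact p.smul_mem r ha
  | grade1 x => exact fun a ha => ι_mul x a ha
  | mul b c hb hc => intro a ha; rw [mul_assoc]; exact hb _ (hc a ha)
  | add b c hb hc => intro a ha; rw [add_mul]; exact p.add_mem (hb a ha) (hc a ha)

end FreeAlgebra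

@[simp] lemma ι_x_eq_X1 : (ι ℚ LetA.x : A1) = X1 := rfl

@[simp] lemma ι_y_eq_Y1 : (ι ℚ LetA.y : A1) = Y1 := rfl

@[simp] lemma ι_x_eq_Xr {G : Type} : (ι ℚ LetR.x : Ar G) = Xr := rfl

@[simp] lemma ι_y_eq_Yr {G : Type} (c : G) : (ι ℚ (LetR.y c) : Ar G) = Yr c := rfl

lemma zdel_one : (zdel 1 : Ar G) = Xr := if_pos rfl

lemma zdel_of_ne_one {t : G} (ht : t ≠ 1) : (zdel t : Ar G) = Xr + Yr t := if_neg ht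

@[simp] lemma phi_Xr : phi (Xr : Ar G) = zet := lift_ι_apply _ _

@[simp] lemma phi_Yr (s : G) : phi (Yr s : Ar G) = zdel s - zet := lift_ι_apply _ _

noncomputable def jmAt (s : G) : A1 →ₐ[ℚ] Ar G :=
  lift ℚ (fun l => match l with
    | LetA.x => Xr
    | LetA.y => Yr s)

lemma jm_eq_jmAt_one : (jm : A1 →ₐ[ℚ] Ar G) = jmAt 1 := rfl

@[simp] lemma jmAt_X1 {G : Type} (s : G) : jmAt s X1 = Xr := lift_ι_apply _ _

@[simp] lemma jmAt_Y1 {G : Type} (s : G) : jmAt s Y1 = Yr s := lift_ι_apply _ _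

noncomputable def phi1 : A1 →ₐ[ℚ] A1 :=
  lift ℚ (fun l => match l with
    | LetA.x => X1 + Y1
    | LetA.y => -Y1)

@[simp] lemma phi1_X1 : phi1 X1 = X1 + Y1 := lift_ι_apply _ _

@[simp] lemma phi1_Y1 : phi1 Y1 = -Y1 := lift_ι_apply _ _

noncomputable def chi (s : G) : A1 →ₐ[ℚ] Ar G :=
  lift ℚ (fun l => match l with
    | LetA.x => zdel s
    | LetA.y => zet - zdel s)

@[simp] lemma chi_X1 (s : G) : chi s X1 = zdel s := lift_ι_apply _ _

@[simp] lemma chi_Y1 (s : G) : chi s Y1 = zet - zdel s := lift_ι_apply _ _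

lemma chi_z_mul (s : G) (v : A1) : chi s ((X1 + Y1) * v) = zet * chi s v := by
  simp

lemma phi_comp_jm : phi.comp jm = (jm : A1 →ₐ[ℚ] Ar G).comp phi1 := by
  ext l
  cases l <;> simp [jm_eq_jmAt_one, zdel_one, zet]

lemma phi_comp_jmAt_comp_phi1 (s : G) : phi.comp ((jmAt s).comp phi1) = chi s := by
  ext l
  cases l <;> simp

lemma wordP_append_singleton {G : Type} (L : List (ℕ × G)) (n : ℕ) (c : G) :
    wordP (L ++ [(n, c)]) = wordP L * (Xr ^ n * Yr c) := by
  simp [wordP]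

lemma cumul_map_one (s : G) (K : List ℕ) :
    cumul s (K.map fun k => (k, 1)) = K.map fun k => (k, s) := by
  induction K with
  | nil => rfl
  | cons k K ih => simp [cumul, ih]

structure IsDiamondRecursive (F : A1 →ₗ[ℚ] Ar G →ₗ[ℚ] Ar G) : Prop where
  xx : ∀ (v : A1) (w : Ar G), F (v * X1) (w * Xr) = F v (w * Xr) * Xr - F (v * Y1) w * Xr
  yx : ∀ (v : A1) (w : Ar G), F (v * Y1) (w * Xr) = F v (w * Xr) * Yr 1 + F (v * Y1) w * Xr
  xy : ∀ (v : A1) (w : Ar G), F (v * X1) (w * Yr 1) = F v (w * Yr 1) * Xr + F (v * X1) w * Yr 1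
  yy : ∀ (v : A1) (w : Ar G), F (v * Y1) (w * Yr 1) = F v (w * Yr 1) * Yr 1 - F (v * X1) w * Yr 1
  xyt : ∀ t : G, t ≠ 1 → ∀ (v : A1) (w : Ar G), F (v * X1) (w * Yr t) =
      F v (w * Yr t) * Xr + F v (w * (Xr + Yr t)) * Yr t - F (v * Y1) w * Yr t
  yyt : ∀ t : G, t ≠ 1 → ∀ (v : A1) (w : Ar G), F (v * Y1) (w * Yr t) =
      F v (w * Yr t) * Yr 1 - F v (w * (Xr + Yr t)) * Yr t + F (v * Y1) w * Yr t

namespace IsDiamondRecursive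

variable {F F' : A1 →ₗ[ℚ] Ar G →ₗ[ℚ] Ar G}

lemma add (hF : IsDiamondRecursive F) (hF' : IsDiamondRecursive F') :
    IsDiamondRecursive (F + F') := by
  constructor <;> intros <;>
    simp (disch := assumption) only [LinearMap.add_apply, hF.xx, hF.yx, hF.xy, hF.yy, hF.xyt,
      hF.yyt, hF'.xx, hF'.yx, hF'.xy, hF'.yy, hF'.xyt, hF'.yyt] <;> noncomm_ring

lemma sub (hF : IsDiamondRecursive F) (hF' : IsDiamondRecursive F') :
    IsDiamondRecursive (F - F') := by
  constructor <;> intros <;>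
    simp (disch := assumption) only [LinearMap.sub_apply, hF.xx, hF.yx, hF.xy, hF.yy, hF.xyt,
      hF.yyt, hF'.xx, hF'.yx, hF'.xy, hF'.yy, hF'.xyt, hF'.yyt] <;> noncomm_ring

lemma comp_mulLeft (hF : IsDiamondRecursive F) (u : A1) :
    IsDiamondRecursive (F.comp (LinearMap.mulLeft ℚ u)) := by
  constructor <;> intros <;>
    simp (disch := assumption) only [LinearMap.comp_apply, LinearMap.mulLeft_apply, ← mul_assoc,
      hF.xx, hF.yx, hF.xy, hF.yy, hF.xyt, hF.yyt]

lemma compl₂_mulLeft (hF : IsDiamondRecursive F) (u : Ar G) :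
    IsDiamondRecursive (F.compl₂ (LinearMap.mulLeft ℚ u)) := by
  constructor <;> intros <;>
    simp (disch := assumption) only [LinearMap.compl₂_apply, LinearMap.mulLeft_apply, ← mul_assoc,
      hF.xx, hF.yx, hF.xy, hF.yy, hF.xyt, hF.yyt]

lemma compr₂_mulLeft (hF : IsDiamondRecursive F) (c : Ar G) :
    IsDiamondRecursive (F.compr₂ (LinearMap.mulLeft ℚ c)) := by
  constructor <;> intros <;>
    simp (disch := assumption) only [LinearMap.compr₂_apply, LinearMap.mulLeft_apply,
      hF.xx, hF.yx, hF.xy, hF.yy, hF.xyt, hF.yyt] <;> noncomm_ring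

lemma mul_X1_mul_zdel (hF : IsDiamondRecursive F) (t : G) (v : A1) (w : Ar G) :
    F (v * X1) (w * zdel t) = F v (w * zdel t) * zdel t - F (v * Y1) w * zdel t := by
  rcases eq_or_ne t 1 with rfl | ht
  · simp only [zdel_one, hF.xx]
  · simp only [zdel_of_ne_one ht, mul_add, map_add, hF.xx, hF.xyt t ht]
    noncomm_ring

lemma mul_Y1_mul_zdel (hF : IsDiamondRecursive F) (t : G) (v : A1) (w : Ar G) :
    F (v * Y1) (w * zdel t) = F v (w * zdel t) * (zet - zdel t) + F (v * Y1) w * zdel t := by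
  rcases eq_or_ne t 1 with rfl | ht
  · simp only [zdel_one, zet, hF.yx]
    noncomm_ring
  · simp only [zdel_of_ne_one ht, zet, mul_add, map_add, hF.yx, hF.yyt t ht]
    noncomm_ring

lemma apply_zdel (hF : IsDiamondRecursive F) (h_right : ∀ v, F v 1 = 0) (t : G) (v : A1) :
    F v (zdel t) = F 1 (zdel t) * chi t v := by
  induction v using FreeAlgebra.induction_mul_ι with
  | one => simp
  | mul_ι v a ih =>
    have hX := hF.mul_X1_mul_zdel t v 1
    have hY := hF.mul_Y1_mul_zdel t v 1
    simp only [one_mul, h_right, zero_mul, sub_zero, add_zero] at hX hY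
    cases a
    · simp [hX, ih, mul_assoc]
    · simp [hY, ih, mul_assoc]
  | add v v' hv hv' => simp [hv, hv', mul_add]
  | smul r v hv => simp [hv]

lemma apply_X1_add_Y1_mul_ι (hF : IsDiamondRecursive F) (w : Ar G) (b : LetR G) :
    F (X1 + Y1) (w * ι ℚ b) = F 1 (w * ι ℚ b) * zet := by
  rcases b with _ | c
  · have hx := hF.xx 1 w
    have hy := hF.yx 1 w
    simp only [one_mul] at hx hy
    simp only [ι_x_eq_Xr, map_add, LinearMap.add_apply, hx, hy, zet]
    noncomm_ring
  · rcases eq_or_ne c 1 with rfl | hc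
    · have hx := hF.xy 1 w
      have hy := hF.yy 1 w
      simp only [one_mul] at hx hy
      simp only [ι_y_eq_Yr, map_add, LinearMap.add_apply, hx, hy, zet]
      noncomm_ring
    · have hx := hF.xyt c hc 1 w
      have hy := hF.yyt c hc 1 w
      simp only [one_mul] at hx hy
      simp only [ι_y_eq_Yr, map_add, LinearMap.add_apply, hx, hy, zet]
      noncomm_ring

lemma apply_eq_zero (hF : IsDiamondRecursive F) (h_left : ∀ w, F 1 w = 0) (h_right : ∀ v, F v 1 = 0)
    (v : A1) (w : Ar G) : F v w = 0 := by
  induction w using FreeAlgebra.induction_mul_ι generalizing v with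
  | one => exact h_right v
  | mul_ι w b ih =>
    -- the rules for `y_t` also involve `w * x`, so the inner induction covers every last letter
    suffices ∀ v (b : LetR G), F v (w * ι ℚ b) = 0 from this v b
    intro v
    induction v using FreeAlgebra.induction_mul_ι with
    | one => exact fun b => h_left _
    | mul_ι v a ihv =>
      have ihx : F v (w * Xr) = 0 := ihv .x
      have ihy (c : G) : F v (w * Yr c) = 0 := ihv (.y c)
      rintro (_ | c)
      · cases a <;> simp [hF.xx, hF.yx, ihx, ih]
      · rcases eq_or_ne c 1 with rfl | hc
        · cases a <;> simp [hF.xy, hF.yy, ihy, ih]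
        · cases a <;> simp [hF.xyt c hc, hF.yyt c hc, ihx, ihy, ih, mul_add]
    | add v v' hv hv' => intro b; simp [hv b, hv' b]
    | smul r v hv => intro b; simp [hv b]
  | add w w' hw hw' => simp [hw v, hw' v]
  | smul r w hw => simp [hw v]

end IsDiamondRecursive

namespace DiamondSetup

variable (S : DiamondSetup G)

lemma psi_jm (s : G) (u : A1) :
    S.psi s (jm u) = phi (jmAt s u) := by
  -- `ψ_s` is only known on words `wordP L * x^n`, so `u` is prefixed by such a word.
  suffices ∀ (K : List ℕ) (n : ℕ),
      S.psi s (wordP (K.map fun k => (k, 1)) * Xr ^ n * jm u) =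
        phi (wordP (K.map fun k => (k, s)) * Xr ^ n * jmAt s u) by
    simpa [wordP] using this [] 0
  induction u using FreeAlgebra.induction_ι_mul with
  | one => intro K n; simp [S.psi_spec, cumul_map_one]
  | ι_mul l u ih =>
    intro K n
    cases l
    · simpa [pow_succ, mul_assoc, jm_eq_jmAt_one] using ih K (n + 1)
    · simpa [mul_assoc, wordP_append_singleton, jm_eq_jmAt_one] using ih (K ++ [n]) 0
  | add u u' hu hu' => intro K n; simp [mul_add, hu K n, hu' K n]
  | smul r u hu => intro K n; simp [hu K n]

lemma D_one_eq_chi (s : G) (v : A1) :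
    S.D s v 1 = chi s v := by
  rw [S.D_one, ← AlgHom.comp_apply phi jm, phi_comp_jm, AlgHom.comp_apply, S.psi_jm,
    ← phi_comp_jmAt_comp_phi1]
  rfl

lemma isDiamondRecursive (s : G) : IsDiamondRecursive (S.D s) :=
  ⟨S.Dxx s, S.Dyx s, S.Dxy s, S.Dyy s, S.Dxyt s, S.Dyyt s⟩

lemma D_X1_add_Y1 (s : G) (u : Ar G) : S.D s (X1 + Y1) u = u * zet := by
  induction u using FreeAlgebra.induction_mul_ι with
  | one => simp [D_one_eq_chi]
  | mul_ι w b _ => rw [(S.isDiamondRecursive s).apply_X1_add_Y1_mul_ι, S.one_D]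
  | add u u' hu hu' => rw [map_add, hu, hu', add_mul]
  | smul r u hu => rw [map_smul, hu, smul_mul_assoc]

lemma D_X1_add_Y1_mul_zdel (s t : G) (v : A1) :
    S.D s ((X1 + Y1) * v) (zdel t) - zet * S.D s v (zdel t) =
      (zdel t * zet - zet * zdel t) * chi t v := by
  let K := (S.D s).comp (LinearMap.mulLeft ℚ (X1 + Y1)) - (S.D s).compr₂ (LinearMap.mulLeft ℚ zet)
  have hK : IsDiamondRecursive K :=
    ((S.isDiamondRecursive s).comp_mulLeft _).sub ((S.isDiamondRecursive s).compr₂_mulLeft _)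
  have hK_right (v : A1) : K v 1 = 0 := by
    simp [K, D_one_eq_chi, chi_z_mul]
  simpa only [K, LinearMap.sub_apply, LinearMap.comp_apply, LinearMap.compr₂_apply,
    LinearMap.mulLeft_apply, mul_one, D_X1_add_Y1, S.one_D] using hK.apply_zdel hK_right t v

noncomputable def defect (s t : G) : A1 →ₗ[ℚ] Ar G →ₗ[ℚ] Ar G :=
  ((S.D s).comp (LinearMap.mulLeft ℚ (X1 + Y1))).compl₂ (LinearMap.mulLeft ℚ (zdel t))
    - ((S.D s).compl₂ (LinearMap.mulLeft ℚ (zdel t))).compr₂ (LinearMap.mulLeft ℚ zet)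
    - ((S.D t).comp (LinearMap.mulLeft ℚ (X1 + Y1))).compr₂ (LinearMap.mulLeft ℚ (zdel t))
    + (S.D t).compr₂ (LinearMap.mulLeft ℚ (zet * zdel t))

lemma defect_apply (s t : G) (v : A1) (w : Ar G) :
    S.defect s t v w = S.D s ((X1 + Y1) * v) (zdel t * w) - zet * S.D s v (zdel t * w)
      - zdel t * S.D t ((X1 + Y1) * v) w + zet * zdel t * S.D t v w :=
  rfl

lemma isDiamondRecursive_defect (s t : G) : IsDiamondRecursive (S.defect s t) :=
  (((((S.isDiamondRecursive s).comp_mulLeft _).compl₂_mulLeft _).sub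
    (((S.isDiamondRecursive s).compl₂_mulLeft _).compr₂_mulLeft _)).sub
    (((S.isDiamondRecursive t).comp_mulLeft _).compr₂_mulLeft _)).add
    ((S.isDiamondRecursive t).compr₂_mulLeft _)

lemma defect_one_left (s t : G) (w : Ar G) : S.defect s t 1 w = 0 := by
  simp only [defect_apply, mul_one, D_X1_add_Y1, S.one_D]
  noncomm_ring

lemma defect_one_right (s t : G) (v : A1) : S.defect s t v 1 = 0 := by
  have h := S.D_X1_add_Y1_mul_zdel s t v
  simp only [defect_apply, mul_one, D_one_eq_chi, chi_z_mul]
  rw [← sub_eq_zero] at h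
  rw [← h]
  noncomm_ring

end DiamondSetup

/-- For all `s, t ∈ μ_r`, `v ∈ A_1`, `w ∈ A_r`:
`(zv) ⋄_s (z_t^δ w) = z(v ⋄_s z_t^δ w) + z_t^δ(zv ⋄_t w) − z z_t^δ(v ⋄_t w)`. -/
theorem statement14 {G : Type} [CommGroup G] (S : DiamondSetup G)
    (s t : G) (v : A1) (w : Ar G) :
    S.D s ((X1 + Y1) * v) (zdel t * w) =
      zet * S.D s v (zdel t * w) + zdel t * S.D t ((X1 + Y1) * v) w
        - zet * zdel t * S.D t v w := by
  have h := (S.isDiamondRecursive_defect s t).apply_eq_zero (S.defect_one_left s t)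
    (S.defect_one_right s t) v w
  rw [S.defect_apply] at h
  rw [← sub_eq_zero, ← h]
  noncomm_ring
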